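/- arXiv:1412.2699 — 2 statements merged into one kernel-verified Lean document; each statement's English description precedes it below -/
import Mathlib

section
/- Let r ∈ ℕ and let c_0, c_1, …, c_r be complex numbers with c_0 ≠ 1 and Σ_{k=0}^{r} |c_k|² = 1. Define c_{k0} = c_k for k = 0,…,r (so c_{00} = c_0), c_{0j} = conj(c_{j0}) · (1 − c_{00})/(1 − conj(c_{00})) for j = 1,…,r, and c_{kj} = δ_{kj} − c_{k0} conj(c_{j0})/(1 − conj(c_{00})) for j, k = 1,…,r. Then the (r+1) × (r+1) matrix (c_{jk})_{j,k=0}^{r} is unitary. -/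
/-!
With `u = e₀ - c` and `e = 1 - conj c₀`, the matrix is `I - e⁻¹ u u*`, a generalised Householder
reflection. Since `(u u*)² = ‖u‖² u u*`, such a matrix is unitary as soon as
`‖u‖² = e + conj e`, and for `‖c‖ = 1` both sides equal `2 - c₀ - conj c₀`.
-/

open MeasureTheory Filter Topology Matrix

noncomputable section

namespace Vilenkin

/-- The underlying additive subgroup of `ℤ → ZMod p` consisting of sequences that
vanish for all sufficiently small indices. -/
def VilSub (p : ℕ) : AddSubgroup (ℤ → ZMod p) where
  carrier := {x | ∃ k : ℤ, ∀ j < k, x j = 0}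
  zero_mem' := ⟨0, fun _ _ => rfl⟩
  add_mem' := by
    rintro a b ⟨ka, hka⟩ ⟨kb, hkb⟩
    refine ⟨min ka kb, fun j hj => ?_⟩
    have h1 := hka j (lt_of_lt_of_le hj (min_le_left _ _))
    have h2 := hkb j (lt_of_lt_of_le hj (min_le_right _ _))
    show a j + b j = 0
    rw [h1, h2, add_zero]
  neg_mem' := by
    rintro a ⟨ka, hka⟩
    refine ⟨ka, fun j hj => ?_⟩
    show -a j = 0
    rw [hka j hj, neg_zero]

/-- The Vilenkin group `G = G_p`. -/
abbrev Vil (p : ℕ) := {x : ℤ → ZMod p // x ∈ VilSub p}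

/-- The (iterated) shift automorphism: `Ash p t x` is `A^t x`, with `(A x)_j = x_{j+1}`. -/
def Ash (p : ℕ) (t : ℤ) (x : Vil p) : Vil p :=
  ⟨fun j => x.1 (j + t), by
    obtain ⟨k, hk⟩ := x.2
    exact ⟨k - t, fun j hj => hk (j + t) (by omega)⟩⟩

/-- `λ(x) = Σ_j x_j p^{-j}`. -/
def lam (p : ℕ) (x : Vil p) : ℝ := ∑' j : ℤ, ((x.1 j).val : ℝ) * (p : ℝ) ^ (-j)

/-- `λ` restricted to `H` with values in `ℕ`:  `Σ_{i ≥ 0} x_{-i} p^i`. -/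
def lamNat (p : ℕ) (x : Vil p) : ℕ := ∑' i : ℕ, (x.1 (-(i : ℤ))).val * p ^ i

/-- The element `h_[α]` of `H` with `λ(h_[α]) = α` (base-`p` digits of `α`). -/
def hElt (p : ℕ) (α : ℕ) : Vil p :=
  ⟨fun j => if j ≤ 0 then ((α / p ^ (-j).toNat : ℕ) : ZMod p) else 0, by
    refine ⟨-(α : ℤ), fun j hj => ?_⟩
    have hj0 : j ≤ 0 := by omega
    show (if j ≤ 0 then ((α / p ^ (-j).toNat : ℕ) : ZMod p) else 0) = 0
    rw [if_pos hj0]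
    rcases Nat.lt_or_ge p 2 with hp | hp
    · interval_cases p
      · have hn : (-j).toNat ≠ 0 := by omega
        simp [zero_pow hn]
      · exact Subsingleton.elim _ _
    · have hn : α < (-j).toNat := by omega
      have h2 : α < 2 ^ (-j).toNat := lt_trans hn Nat.lt_two_pow_self
      have hpow : α < p ^ (-j).toNat :=
        lt_of_lt_of_le h2 (Nat.pow_le_pow_left hp _)
      rw [Nat.div_eq_of_lt hpow]
      simp⟩

/-- The character `χ(x, ω) = exp((2πi/p) Σ_j x_j ω_{1-j})`. -/
def chi (p : ℕ) (x ω : Vil p) : ℂ :=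
  Complex.exp ((2 * Real.pi * Complex.I / p) *
    ∑' j : ℤ, (((x.1 j).val : ℂ) * ((ω.1 (1 - j)).val : ℂ)))

/-- The generalized Walsh function `W_α(x) = χ(x, h_[α])`. -/
def Walsh (p : ℕ) (α : ℕ) (x : Vil p) : ℂ := chi p x (hElt p α)

/-- The element `δ_l` of `G` with `λ(δ_l) = l / p`. -/
def deltaElt (p : ℕ) (l : ℕ) : Vil p :=
  ⟨fun j => if j = 1 then (l : ZMod p) else 0, ⟨1, fun j hj => if_neg (by omega)⟩⟩

/-- `U_l = {x : x_j = 0 for j ≤ l}`. -/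
def Uball (p : ℕ) (l : ℤ) : Set (Vil p) := {x | ∀ j ≤ l, x.1 j = 0}

/-- `U = U_0`. -/
def Uset (p : ℕ) : Set (Vil p) := Uball p 0

/-- `H = {x : x_j = 0 for j > 0}`. -/
def Hset (p : ℕ) : Set (Vil p) := {x | ∀ j : ℤ, 0 < j → x.1 j = 0}

/-- The non-Archimedean norm `‖x‖ = p^{-k(x)}`, `‖θ‖ = 0`. -/
def vnorm (p : ℕ) (x : Vil p) : ℝ := ⨆ j : ℤ, (if x.1 j ≠ 0 then (p : ℝ) ^ (-j) else 0)

/-- The Vilenkin topology, generated by the cosets of the subgroups `U_l`. -/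
instance (p : ℕ) : TopologicalSpace (Vil p) :=
  TopologicalSpace.generateFrom
    {S | ∃ (x : Vil p) (l : ℤ), S = {y : Vil p | ∀ j ≤ l, y.1 j = x.1 j}}

instance (p : ℕ) : MeasurableSpace (Vil p) := borel (Vil p)

/-- `μ` is the Haar measure on `G`: translation invariant and normalized by `μ(U) = 1`. -/
def IsHaar (p : ℕ) (μ : Measure (Vil p)) : Prop :=
  (∀ (a : Vil p) (s : Set (Vil p)), μ ((fun x => a + x) ⁻¹' s) = μ s) ∧ μ (Uset p) = 1

/-- The Fourier transform (integral form) `f̂(ω) = ∫ f(x) conj χ(x,ω) dμ(x)`. -/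
def FT (p : ℕ) (μ : Measure (Vil p)) (f : Vil p → ℂ) (ω : Vil p) : ℂ :=
  ∫ x, f x * (starRingEnd ℂ) (chi p x ω) ∂μ

/-- The `L²` inner product `⟨f, g⟩ = ∫ f conj g dμ`. -/
def ip (p : ℕ) (μ : Measure (Vil p)) (f g : Vil p → ℂ) : ℂ :=
  ∫ x, f x * (starRingEnd ℂ) (g x) ∂μ

/-- The dilated-translated system `ψ_{j,k}(x) = p^{j/2} ψ(A^j x ⊖ h_[k])`. -/
def wsys (p : ℕ) (ψ : Vil p → ℂ) (j : ℤ) (k : ℕ) (x : Vil p) : ℂ :=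
  ((Real.sqrt p ^ j : ℝ) : ℂ) * ψ (Ash p j x - hElt p k)

/-- `m` is the Walsh polynomial of order `p^n - 1` with coefficients `a`. -/
def IsWalshPolyOfOrder (p n : ℕ) (a : ℕ → ℂ) (m : Vil p → ℂ) : Prop :=
  ∀ ω, m ω = ∑ α ∈ Finset.range (p ^ n), a α * (starRingEnd ℂ) (Walsh p α ω)

/-- `m` is a Walsh polynomial. -/
def IsWalshPoly (p : ℕ) (m : Vil p → ℂ) : Prop :=
  ∃ n a, IsWalshPolyOfOrder p n a m

/-- The polyphase component `μ_{ν,s}(ω) = √p Σ_{α < p^{n-1}} a_{pα+s} conj W_α(ω)`. -/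
def polyphase (p n : ℕ) (a : ℕ → ℂ) (s : ℕ) (ω : Vil p) : ℂ :=
  (Real.sqrt p : ℂ) *
    ∑ α ∈ Finset.range (p ^ (n - 1)), a (p * α + s) * (starRingEnd ℂ) (Walsh p α ω)

/-- The matrix `M(ω)` with entries `M(ω)_{l,ν} = m_ν(ω ⊕ δ_l)`. -/
def MaskMatrix (p r : ℕ) (m : Fin (r + 1) → Vil p → ℂ) (ω : Vil p) :
    Matrix (Fin p) (Fin (r + 1)) ℂ :=
  Matrix.of fun l ν => m ν (ω + deltaElt p (l : ℕ))

/-- The unitary extension condition `M(ω) M(ω)* = I_p` for all `ω`. -/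
def UEP (p r : ℕ) (m : Fin (r + 1) → Vil p → ℂ) : Prop :=
  ∀ ω : Vil p, MaskMatrix p r m ω * (MaskMatrix p r m ω)ᴴ = 1

/-- Condition (*): `Σ_{l<p} |m_0(ω ⊕ δ_l)|² ≤ 1` for all `ω`. -/
def StarCond (p : ℕ) (m0 : Vil p → ℂ) : Prop :=
  ∀ ω : Vil p, ∑ l ∈ Finset.range p, ‖m0 (ω + deltaElt p l)‖ ^ 2 ≤ 1

/-- `φ` satisfies the refinement equation with coefficients `a` (of length `p^n`). -/
def RefinableWithMask (p n : ℕ) (a : ℕ → ℂ) (φ : Vil p → ℂ) : Prop :=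
  ∀ x, φ x = p * ∑ α ∈ Finset.range (p ^ n), a α * φ (Ash p 1 x - hElt p α)

/-- The coset `U_{n,l} = A^{-n}(h_[l]) ⊕ A^{-n}(U)`. -/
def Unl (p : ℕ) (n l : ℕ) : Set (Vil p) :=
  (fun u => Ash p (-(n : ℤ)) (hElt p l) + Ash p (-(n : ℤ)) u) '' Uset p

/-- Membership in the Sobolev space `W₂^m`, phrased in terms of (a representative of)
the Fourier transform `fhat` of `f`. -/
def MemW2 (p : ℕ) (μ : Measure (Vil p)) (m : ℕ) (fhat : Vil p → ℂ) : Prop :=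
  ∀ k ≤ m, Integrable (fun ω => vnorm p ω ^ (2 * k) * ‖fhat ω‖ ^ 2) μ

/-- The Sobolev norm `‖f‖_{2,m}`, phrased via the Fourier transform `fhat` of `f`. -/
def sobNorm (p : ℕ) (μ : Measure (Vil p)) (m : ℕ) (fhat : Vil p → ℂ) : ℝ :=
  ∑ k ∈ Finset.range (m + 1), Real.sqrt (∫ ω, vnorm p ω ^ (2 * k) * ‖fhat ω‖ ^ 2 ∂μ)

end Vilenkin

theorem one_sub_inv_smul_vecMulVec_mem_unitaryGroup {ι K : Type*} [Fintype ι] [DecidableEq ι]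
    [Field K] [StarRing K] {e : K} {u : ι → K} (hu : star u ⬝ᵥ u = e + star e) :
    1 - e⁻¹ • vecMulVec u (star u) ∈ unitaryGroup ι K := by
  rcases eq_or_ne e 0 with rfl | he
  · simp -- `0⁻¹ = 0`, so the matrix is `1`
  set P := vecMulVec u (star u)
  have hP : Pᴴ = P := by simp [P]
  have hPP : P * P = (e + star e) • P := by
    rw [vecMulVec_mul_vecMulVec, hu, vecMulVec_smul]
  have hcoef : e⁻¹ * (star e)⁻¹ * (e + star e) = e⁻¹ + (star e)⁻¹ := by
    have hse : star e ≠ 0 := star_ne_zero.mpr he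
    field_simp
    ring
  rw [mem_unitaryGroup_iff, star_eq_conjTranspose, conjTranspose_sub, conjTranspose_smul,
    conjTranspose_one, hP, star_inv₀]
  calc (1 - e⁻¹ • P) * (1 - (star e)⁻¹ • P)
      = 1 - (e⁻¹ + (star e)⁻¹) • P + (e⁻¹ * (star e)⁻¹) • (P * P) := by
        simp only [sub_mul, mul_sub, one_mul, mul_one, smul_mul_smul, add_smul]
        abel
    _ = 1 := by rw [hPP, smul_smul, hcoef, sub_add_cancel]

theorem star_single_sub_dotProduct_self {ι K : Type*} [Fintype ι] [DecidableEq ι]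
    [CommRing K] [StarRing K] (i : ι) (c : ι → K) :
    star (Pi.single i 1 - c) ⬝ᵥ (Pi.single i 1 - c) = 1 - star (c i) - c i + star c ⬝ᵥ c := by
  simp only [star_sub, ← Pi.single_star, star_one, sub_dotProduct, dotProduct_sub,
    single_dotProduct, dotProduct_single, one_mul, mul_one, Pi.sub_apply, Pi.single_eq_same,
    Pi.star_apply]
  ring

theorem RCLike.star_dotProduct_self {ι 𝕜 : Type*} [Fintype ι] [RCLike 𝕜] (c : ι → 𝕜) :
    star c ⬝ᵥ c = ((∑ k, ‖c k‖ ^ 2 : ℝ) : 𝕜) := by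
  simp [dotProduct, RCLike.conj_mul]

theorem eq_one_sub_inv_smul_vecMulVec {ι K : Type*} [Fintype ι] [DecidableEq ι]
    [Field K] [StarRing K] {i : ι} {c : ι → K} (hci : c i ≠ 1) {C : Matrix ι ι K}
    (hcol : ∀ k, C k i = c k)
    (hrow : ∀ j, j ≠ i → C i j = star (c j) * ((1 - c i) / (1 - star (c i))))
    (hin : ∀ k j, k ≠ i → j ≠ i →
      C k j = (if k = j then 1 else 0) - c k * star (c j) / (1 - star (c i))) :
    C = 1 - (1 - star (c i))⁻¹ • vecMulVec (Pi.single i 1 - c) (star (Pi.single i 1 - c)) := by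
  have he : 1 - star (c i) ≠ 0 := by
    rw [sub_ne_zero, ne_comm, Ne, ← star_one, star_inj]
    exact hci
  ext k j
  simp only [Matrix.sub_apply, one_apply, Matrix.smul_apply, vecMulVec_apply, Pi.sub_apply,
    Pi.star_apply, Pi.single_apply, star_sub, apply_ite star, star_one, star_zero, smul_eq_mul]
  by_cases hk : k = i <;> by_cases hj : j = i
  · subst hk hj
    simp only [hcol, if_true]; field_simp; ring
  · subst hk
    simp only [hrow j hj, if_true, if_neg hj, if_neg (Ne.symm hj)]; field_simp; ring
  · subst hj
    simp only [hcol, if_true, if_neg hk]; field_simp; ring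
  · simp only [hin k j hk hj, if_neg hk, if_neg hj]; field_simp; ring

namespace Vilenkin

/-- **Proposition 5 (Householder transform).**  If `Σ_{k=0}^r |c_k|² = 1` and `c_0 ≠ 1`,
then the matrix with first column `c_{k0} = c_k`,
`c_{0j} = conj(c_{j0}) (1 - c_{00})/(1 - conj c_{00})` and
`c_{kj} = δ_{kj} - c_{k0} conj(c_{j0})/(1 - conj c_{00})` (for `j, k ≥ 1`) is unitary. -/
theorem statement8 (r : ℕ) (c : Fin (r + 1) → ℂ) (hc0 : c 0 ≠ 1)
    (hnorm : ∑ k : Fin (r + 1), ‖c k‖ ^ 2 = 1)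
    (C : Matrix (Fin (r + 1)) (Fin (r + 1)) ℂ)
    (hcol : ∀ k, C k 0 = c k)
    (hrow : ∀ j, j ≠ 0 →
      C 0 j = (starRingEnd ℂ) (c j) * ((1 - c 0) / (1 - (starRingEnd ℂ) (c 0))))
    (hin : ∀ k j, k ≠ 0 → j ≠ 0 →
      C k j = (if k = j then 1 else 0) -
        c k * (starRingEnd ℂ) (c j) / (1 - (starRingEnd ℂ) (c 0))) :
    C ∈ Matrix.unitaryGroup (Fin (r + 1)) ℂ := by
  have hu : star (Pi.single 0 1 - c) ⬝ᵥ (Pi.single 0 1 - c) =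
      (1 - star (c 0)) + star (1 - star (c 0)) := by
    rw [star_single_sub_dotProduct_self, RCLike.star_dotProduct_self, hnorm, star_sub, star_star,
      star_one, RCLike.ofReal_one]
    ring
  rw [eq_one_sub_inv_smul_vecMulVec hc0 hcol hrow hin]
  exact one_sub_inv_smul_vecMulVec_mem_unitaryGroup hu

end Vilenkin
end
end

section
/- Let n ∈ ℕ and let m_0 be a Walsh polynomial of order p^n − 1 with coefficients a_α, i.e. m_0(ω) = Σ_{α=0}^{p^n−1} a_α conj(W_α(ω)). Then m_0(θ) = 1 and condition (*) hold if and only if the coefficients a_α are given by the discrete Vilenkin–Chrestenson transform a_α = p^{−n} Σ_{s=0}^{p^n−1} b_s W_α(A^{−n} h_[s]) of complex numbers b_0,…,b_{p^n−1} (equivalently, b_s = m_0(A^{−n} h_[s])) satisfying b_0 = 1 and |b_l|² + |b_{l+p^{n−1}}|² + ⋯ + |b_{l+(p−1)p^{n−1}}|² ≤ 1 for every l = 0,…,p^{n−1}−1. -/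
open MeasureTheory Filter Topology Matrix

noncomputable section

namespace Vilenkin

open Finset

/-!
For `α < p ^ n` the Walsh function `W_α` is a product of characters of the coordinates
`ω_1, …, ω_n`, so `m_0` only depends on these coordinates, and each pattern of them is realised
by exactly one grid point `A^{-n} h_[s]`, `s < p ^ n`. On the grid the Walsh functions are
orthogonal (the sum factors into `n` character sums over `ℤ/p`), which inverts `a ↦ m_0` as the
discrete Vilenkin–Chrestenson transform. Finally
`A^{-n} h_[l + i p^{n-1}] = A^{-n} h_[l] ⊕ δ_i`, so `Σ_i |b_{l + i p^{n-1}}|²` is the sum in (*)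
at `ω = A^{-n} h_[l]`; and (*) at an arbitrary `ω` reduces to such a grid point, because
shifting `ω` by `δ_i` only permutes the terms of the sum.
-/

section

variable {p : ℕ}

theorem sum_range_pow_prod_digits {R : Type*} [CommSemiring R] (n : ℕ) (f : ℕ → ℕ → R) :
    ∑ s ∈ range (p ^ n), ∏ k ∈ range n, f k (s / p ^ k % p) =
      ∏ k ∈ range n, ∑ t ∈ range p, f k t := by
  simp_rw [← Fin.sum_univ_eq_sum_range, ← Fin.prod_univ_eq_prod_range]
  rw [Fintype.prod_sum, ← finFunctionFinEquiv.symm.sum_comp]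
  rfl

theorem eq_of_forall_digit_eq {n α β : ℕ} (hα : α < p ^ n) (hβ : β < p ^ n)
    (h : ∀ k < n, α / p ^ k % p = β / p ^ k % p) : α = β := by
  have hdig : finFunctionFinEquiv.symm (⟨α, hα⟩ : Fin (p ^ n)) =
      finFunctionFinEquiv.symm ⟨β, hβ⟩ := funext fun k => Fin.ext (h k k.isLt)
  simpa using finFunctionFinEquiv.symm.injective hdig

theorem sum_range_natCast_eq_sum [NeZero p] {M : Type*} [AddCommMonoid M] (f : ZMod p → M) :
    ∑ t ∈ range p, f t = ∑ z : ZMod p, f z := by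
  refine sum_nbij' (fun t => (t : ZMod p)) ZMod.val (by simp) (fun z _ => mem_range.2 z.val_lt)
    (fun t ht => ZMod.val_cast_of_lt (mem_range.1 ht)) (fun z _ => ZMod.natCast_zmod_val z)
    (fun _ _ => rfl)

theorem ash_apply (t : ℤ) (x : Vil p) (j : ℤ) : (Ash p t x).1 j = x.1 (j + t) := rfl

theorem hElt_apply (α : ℕ) (j : ℤ) :
    (hElt p α).1 j = if j ≤ 0 then ((α / p ^ (-j).toNat : ℕ) : ZMod p) else 0 := rfl

theorem Vil.add_apply (x y : Vil p) (j : ℤ) : (x + y).1 j = x.1 j + y.1 j := rfl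

theorem stdAddChar_mul_eq_exp [NeZero p] (a b : ZMod p) :
    ZMod.stdAddChar (a * b) =
      Complex.exp (2 * Real.pi * Complex.I / p * ((a.val : ℂ) * (b.val : ℂ))) := by
  have hab : a * b = ((a.val * b.val : ℕ) : ZMod p) := by
    simp only [Nat.cast_mul, ZMod.natCast_zmod_val]
  rw [hab, ZMod.stdAddChar_apply, ZMod.toCircle_natCast]
  push_cast
  ring_nf

theorem walsh_eq_prod [NeZero p] {n α : ℕ} (hα : α < p ^ n) (x : Vil p) :
    Walsh p α x =
      ∏ k ∈ range n, ZMod.stdAddChar (x.1 (k + 1) * ((α / p ^ k : ℕ) : ZMod p)) := by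
  let coords : ℕ ↪ ℤ := ⟨fun k => (k : ℤ) + 1, fun a b h => by simpa using h⟩
  have hsupp : ∀ j ∉ (range n).map coords,
      ((x.1 j).val : ℂ) * (((hElt p α).1 (1 - j)).val : ℂ) = 0 := by
    intro j hj
    have hj' : j ≤ 0 ∨ (n : ℤ) < j := by
      by_contra! h
      refine hj (mem_map.2 ⟨(j - 1).toNat, mem_range.2 (by omega), ?_⟩)
      show ((j - 1).toNat : ℤ) + 1 = j
      omega
    have hdigit : (hElt p α).1 (1 - j) = 0 := by
      rw [hElt_apply]
      split_ifs with h
      · have hle : p ^ n ≤ p ^ (-(1 - j)).toNat :=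
          Nat.pow_le_pow_right (NeZero.pos p) (by omega)
        rw [Nat.div_eq_of_lt (hα.trans_le hle), Nat.cast_zero]
      · rfl
    rw [hdigit, ZMod.val_zero, Nat.cast_zero, mul_zero]
  rw [Walsh, chi, tsum_eq_sum hsupp, sum_map, mul_sum, Complex.exp_sum]
  refine prod_congr rfl fun k _ => ?_
  have hdigit : (hElt p α).1 (1 - ((k : ℤ) + 1)) = ((α / p ^ k : ℕ) : ZMod p) := by
    rw [hElt_apply, if_pos (by omega)]
    congr
    omega
  rw [stdAddChar_mul_eq_exp, ← hdigit]
  rfl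

theorem IsWalshPolyOfOrder.congr [NeZero p] {n : ℕ} {a : ℕ → ℂ} {m : Vil p → ℂ}
    (hm : IsWalshPolyOfOrder p n a m) {x y : Vil p} (h : ∀ k < n, x.1 (k + 1) = y.1 (k + 1)) :
    m x = m y := by
  rw [hm x, hm y]
  refine sum_congr rfl fun α hα => ?_
  rw [walsh_eq_prod (mem_range.1 hα), walsh_eq_prod (mem_range.1 hα),
    prod_congr rfl fun k hk => by rw [h k (mem_range.1 hk)]]

theorem ash_add (t : ℤ) (x y : Vil p) : Ash p t (x + y) = Ash p t x + Ash p t y := rfl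

theorem ash_ash (t u : ℤ) (x : Vil p) : Ash p t (Ash p u x) = Ash p (t + u) x :=
  Subtype.ext <| funext fun j => by simp only [ash_apply, add_assoc]

theorem hElt_zero : hElt p 0 = 0 :=
  Subtype.ext <| funext fun j => by simp [hElt_apply]

theorem hElt_add_mul_pow [NeZero p] {l m : ℕ} (hl : l < p ^ m) (i : ℕ) :
    hElt p (l + i * p ^ m) = hElt p l + Ash p m (hElt p i) := by
  refine Subtype.ext <| funext fun j => ?_
  rw [Vil.add_apply, ash_apply, hElt_apply, hElt_apply, hElt_apply]
  by_cases hj : j ≤ 0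
  · rcases lt_or_ge (-j).toNat m with hK | hK
    · rw [if_pos hj, if_pos hj, if_neg (by omega), add_zero]
      have hsplit : i * p ^ m = i * p ^ (m - (-j).toNat) * p ^ (-j).toNat := by
        rw [mul_assoc, ← pow_add, Nat.sub_add_cancel hK.le]
      rw [hsplit, Nat.add_mul_div_right _ _ (pow_pos (NeZero.pos p) _), Nat.cast_add,
        Nat.cast_mul, Nat.cast_pow, ZMod.natCast_self, zero_pow (by omega), mul_zero, add_zero]
    · rw [if_pos hj, if_pos hj, if_pos (by omega)]
      have hpow : p ^ (-j).toNat = p ^ m * p ^ (-(j + m)).toNat := by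
        rw [← pow_add]
        congr 1
        omega
      rw [hpow, ← Nat.div_div_eq_div_mul, ← Nat.div_div_eq_div_mul,
        Nat.add_mul_div_right _ _ (pow_pos (NeZero.pos p) _), Nat.div_eq_of_lt hl, zero_add,
        Nat.zero_div, Nat.cast_zero, zero_add]
  · rw [if_neg hj, if_neg hj, if_neg (by omega), add_zero]

theorem ash_neg_one_hElt {i : ℕ} (hi : i < p) : Ash p (-1) (hElt p i) = deltaElt p i := by
  refine Subtype.ext <| funext fun j => ?_
  rw [ash_apply, hElt_apply]
  show _ = if j = 1 then (i : ZMod p) else 0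
  by_cases hj1 : j = 1
  · subst hj1
    simp
  · rw [if_neg hj1]
    split_ifs with hj
    · have hle : p ≤ p ^ (-(j + -1)).toNat :=
        Nat.le_self_pow (by omega) p
      rw [Nat.div_eq_of_lt (hi.trans_le hle), Nat.cast_zero]
    · rfl

-- `A^{-n} h_[s]`: for `s < p ^ n` its coordinates `1, …, n` are the base-`p` digits of `s`,
-- most significant first, and all others vanish.
def gridPoint (p n s : ℕ) : Vil p := Ash p (-(n : ℤ)) (hElt p s)

theorem gridPoint_apply_succ {n k : ℕ} (s : ℕ) (hk : k < n) :
    (gridPoint p n s).1 (k + 1) = ((s / p ^ (n - 1 - k) : ℕ) : ZMod p) := by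
  rw [gridPoint, ash_apply, hElt_apply, if_pos (by omega)]
  congr
  omega

theorem gridPoint_zero (n : ℕ) : gridPoint p n 0 = 0 := by
  rw [gridPoint, hElt_zero]
  rfl

theorem add_mul_pow_pred_lt {n l i : ℕ} (hn : 1 ≤ n) (hl : l < p ^ (n - 1)) (hi : i < p) :
    l + i * p ^ (n - 1) < p ^ n :=
  calc l + i * p ^ (n - 1) < p ^ (n - 1) * p := by
        rw [mul_comm i]
        exact Nat.add_mul_lt_mul_of_lt_of_lt hl hi
    _ = p ^ n := by rw [← pow_succ, Nat.sub_add_cancel hn]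

theorem gridPoint_add_mul_pow [NeZero p] {n l i : ℕ} (hn : 1 ≤ n) (hl : l < p ^ (n - 1))
    (hi : i < p) : gridPoint p n (l + i * p ^ (n - 1)) = gridPoint p n l + deltaElt p i := by
  rw [gridPoint, hElt_add_mul_pow hl, ash_add, ash_ash, ← ash_neg_one_hElt hi]
  congr 2
  omega

theorem exists_gridPoint_eq [NeZero p] (n : ℕ) (ω : Vil p) :
    ∃ s < p ^ n, ∀ k < n, (gridPoint p n s).1 (k + 1) = ω.1 (k + 1) := by
  let g : Fin n → Fin p := fun k => ⟨(ω.1 (n - k)).val, ZMod.val_lt _⟩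
  refine ⟨finFunctionFinEquiv g, (finFunctionFinEquiv g).isLt, fun k hk => ?_⟩
  have hdigit :
      (finFunctionFinEquiv g : ℕ) / p ^ (n - 1 - k) % p = (g ⟨n - 1 - k, by omega⟩ : ℕ) :=
    congrArg (fun f => (f ⟨n - 1 - k, by omega⟩ : ℕ)) (finFunctionFinEquiv.symm_apply_apply g)
  rw [gridPoint_apply_succ _ hk, ← ZMod.natCast_mod, hdigit]
  show ((ω.1 (n - (n - 1 - k : ℕ))).val : ZMod p) = _
  rw [show (n : ℤ) - (n - 1 - k : ℕ) = k + 1 by omega, ZMod.natCast_zmod_val]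

theorem walsh_gridPoint [NeZero p] {n α : ℕ} (hα : α < p ^ n) (s : ℕ) :
    Walsh p α (gridPoint p n s) = ∏ k ∈ range n,
      ZMod.stdAddChar (((s / p ^ k : ℕ) : ZMod p) * ((α / p ^ (n - 1 - k) : ℕ) : ZMod p)) := by
  rw [walsh_eq_prod hα, ← prod_range_reflect]
  refine prod_congr rfl fun k hk => ?_
  have hk : k < n := mem_range.1 hk
  rw [gridPoint_apply_succ _ (by omega), show n - 1 - (n - 1 - k) = k by omega]

theorem sum_walsh_mul_conj_gridPoint [NeZero p] {n α β : ℕ} (hα : α < p ^ n)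
    (hβ : β < p ^ n) :
    ∑ s ∈ range (p ^ n),
        Walsh p α (gridPoint p n s) * starRingEnd ℂ (Walsh p β (gridPoint p n s)) =
      if α = β then (p : ℂ) ^ n else 0 := by
  let c : ℕ → ZMod p := fun k =>
    ((α / p ^ (n - 1 - k) : ℕ) : ZMod p) - ((β / p ^ (n - 1 - k) : ℕ) : ZMod p)
  have hterm : ∀ s, Walsh p α (gridPoint p n s) * starRingEnd ℂ (Walsh p β (gridPoint p n s)) =
      ∏ k ∈ range n, ZMod.stdAddChar (((s / p ^ k % p : ℕ) : ZMod p) * c k) := by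
    intro s
    rw [walsh_gridPoint hα, walsh_gridPoint hβ, map_prod, ← prod_mul_distrib]
    refine prod_congr rfl fun k _ => ?_
    rw [← AddChar.map_neg_eq_conj, ← AddChar.map_add_eq_mul, ZMod.natCast_mod, mul_sub,
      sub_eq_add_neg]
  have hfactor : ∀ k, ∑ t ∈ range p, ZMod.stdAddChar ((t : ZMod p) * c k) =
      if c k = 0 then (p : ℂ) else 0 := by
    intro k
    rw [sum_range_natCast_eq_sum (fun z => ZMod.stdAddChar (z * c k)),
      AddChar.sum_mulShift _ (ZMod.isPrimitive_stdAddChar p), ZMod.card, Nat.cast_ite,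
      Nat.cast_zero]
  have hdigits : (∀ k ∈ range n, c k = 0) ↔ α = β := by
    refine ⟨fun h => eq_of_forall_digit_eq hα hβ fun k hk => ?_,
      by rintro rfl k -; exact sub_self _⟩
    have hk' := h (n - 1 - k) (mem_range.2 (by omega))
    rwa [sub_eq_zero, ZMod.natCast_eq_natCast_iff', show n - 1 - (n - 1 - k) = k by omega]
      at hk'
  rw [sum_congr rfl fun s _ => hterm s,
    sum_range_pow_prod_digits n fun k t => ZMod.stdAddChar ((t : ZMod p) * c k),
    prod_congr rfl fun k _ => hfactor k, prod_ite_zero, prod_const, card_range]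
  exact if_congr hdigits rfl rfl

theorem IsWalshPolyOfOrder.coeff_eq [NeZero p] {n : ℕ} {a : ℕ → ℂ} {m : Vil p → ℂ}
    (hm : IsWalshPolyOfOrder p n a m) {α : ℕ} (hα : α < p ^ n) :
    a α = ((p : ℂ) ^ n)⁻¹ *
      ∑ s ∈ range (p ^ n), m (gridPoint p n s) * Walsh p α (gridPoint p n s) := by
  have hsum : ∑ s ∈ range (p ^ n), m (gridPoint p n s) * Walsh p α (gridPoint p n s) =
      ∑ β ∈ range (p ^ n), a β * ∑ s ∈ range (p ^ n),
        Walsh p α (gridPoint p n s) * starRingEnd ℂ (Walsh p β (gridPoint p n s)) := by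
    simp_rw [show ∀ ω, m ω = _ from hm, sum_mul, mul_sum]
    rw [sum_comm]
    exact sum_congr rfl fun β _ => sum_congr rfl fun s _ => by ring
  rw [hsum, sum_congr rfl fun β hβ => by rw [sum_walsh_mul_conj_gridPoint hα (mem_range.1 hβ)]]
  simp_rw [mul_ite, mul_zero]
  rw [sum_ite_eq, if_pos (mem_range.2 hα), mul_comm (a α),
    inv_mul_cancel_left₀ (pow_ne_zero _ (NeZero.ne _))]

theorem deltaElt_add (i l : ℕ) : deltaElt p i + deltaElt p l = deltaElt p (i + l) := by
  refine Subtype.ext <| funext fun j => ?_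
  show (if j = 1 then (i : ZMod p) else 0) + (if j = 1 then (l : ZMod p) else 0) =
    if j = 1 then ((i + l : ℕ) : ZMod p) else 0
  split_ifs <;> simp

theorem deltaElt_natCast_val [NeZero p] (l : ℕ) : deltaElt p (l : ZMod p).val = deltaElt p l :=
  Subtype.ext <| funext fun j => by simp [deltaElt]

theorem sum_range_add_deltaElt_add [NeZero p] {M : Type*} [AddCommMonoid M] (f : Vil p → M)
    (ω : Vil p) (i : ℕ) :
    ∑ l ∈ range p, f (ω + deltaElt p i + deltaElt p l) =
      ∑ l ∈ range p, f (ω + deltaElt p l) := by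
  let F : ZMod p → M := fun z => f (ω + deltaElt p z.val)
  have hF : ∀ l : ℕ, f (ω + deltaElt p l) = F l := fun l => by
    simp only [F, deltaElt_natCast_val]
  calc ∑ l ∈ range p, f (ω + deltaElt p i + deltaElt p l)
      = ∑ l ∈ range p, F ((i : ZMod p) + l) := by
        simp_rw [add_assoc, deltaElt_add, hF, Nat.cast_add]
    _ = ∑ z, F z := by
        rw [sum_range_natCast_eq_sum fun z => F ((i : ZMod p) + z)]
        exact Equiv.sum_comp (Equiv.addLeft (i : ZMod p)) F
    _ = ∑ l ∈ range p, f (ω + deltaElt p l) := by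
        simp_rw [hF]
        exact (sum_range_natCast_eq_sum F).symm

theorem IsWalshPolyOfOrder.starCond_iff [NeZero p] {n : ℕ} {a : ℕ → ℂ} {m : Vil p → ℂ}
    (hm : IsWalshPolyOfOrder p n a m) (hn : 1 ≤ n) :
    StarCond p m ↔ ∀ l < p ^ (n - 1),
      ∑ i ∈ range p, ‖m (gridPoint p n (l + i * p ^ (n - 1)))‖ ^ 2 ≤ 1 := by
  have hfiber : ∀ l < p ^ (n - 1),
      ∑ i ∈ range p, ‖m (gridPoint p n (l + i * p ^ (n - 1)))‖ ^ 2 =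
        ∑ i ∈ range p, ‖m (gridPoint p n l + deltaElt p i)‖ ^ 2 :=
    fun l hl => sum_congr rfl fun i hi => by rw [gridPoint_add_mul_pow hn hl (mem_range.1 hi)]
  refine ⟨fun h l hl => (hfiber l hl).trans_le (h _), fun h ω => ?_⟩
  obtain ⟨s, hs, hsω⟩ := exists_gridPoint_eq n ω
  have hi : s / p ^ (n - 1) < p :=
    Nat.div_lt_of_lt_mul (by rwa [← pow_succ, Nat.sub_add_cancel hn])
  have hl : s % p ^ (n - 1) < p ^ (n - 1) := Nat.mod_lt _ (pow_pos (NeZero.pos p) _)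
  have hdecomp : gridPoint p n s =
      gridPoint p n (s % p ^ (n - 1)) + deltaElt p (s / p ^ (n - 1)) := by
    rw [← gridPoint_add_mul_pow hn hl hi, Nat.mod_add_div']
  calc ∑ l ∈ range p, ‖m (ω + deltaElt p l)‖ ^ 2
      = ∑ l ∈ range p, ‖m (gridPoint p n s + deltaElt p l)‖ ^ 2 :=
        sum_congr rfl fun l _ => by
          rw [hm.congr (y := gridPoint p n s + deltaElt p l) fun k hk => by
            rw [Vil.add_apply, Vil.add_apply, hsω k hk]]
    _ = ∑ l ∈ range p, ‖m (gridPoint p n (s % p ^ (n - 1)) + deltaElt p l)‖ ^ 2 := by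
        rw [hdecomp, sum_range_add_deltaElt_add fun x => ‖m x‖ ^ 2]
    _ ≤ 1 := (hfiber _ hl).symm.trans_le (h _ hl)

end

/-- **Proposition 6.**  A Walsh polynomial `m_0` of order `p^n - 1` satisfies `m_0(θ) = 1`
and condition (*) iff its coefficients are given by the discrete Vilenkin–Chrestenson
transform `a_α = p^{-n} Σ_s b_s W_α(A^{-n} h_[s])` of numbers `b_s` (equivalently
`b_s = m_0(A^{-n} h_[s])`) satisfying `b_0 = 1` and
`|b_l|² + |b_{l+p^{n-1}}|² + ⋯ + |b_{l+(p-1)p^{n-1}}|² ≤ 1` for `0 ≤ l ≤ p^{n-1} - 1`. -/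
theorem statement12 (p : ℕ) (hp : 2 ≤ p) (n : ℕ) (hn : 1 ≤ n)
    (a : ℕ → ℂ) (m0 : Vil p → ℂ) (hm0 : IsWalshPolyOfOrder p n a m0) :
    (m0 0 = 1 ∧ StarCond p m0) ↔
      ∃ b : ℕ → ℂ,
        (∀ α < p ^ n, a α = ((p : ℂ) ^ n)⁻¹ *
          ∑ s ∈ Finset.range (p ^ n), b s * Walsh p α (Ash p (-(n : ℤ)) (hElt p s))) ∧
        (∀ s < p ^ n, b s = m0 (Ash p (-(n : ℤ)) (hElt p s))) ∧
        b 0 = 1 ∧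
        (∀ l < p ^ (n - 1),
          ∑ i ∈ Finset.range p, ‖b (l + i * p ^ (n - 1))‖ ^ 2 ≤ 1) := by
  have : NeZero p := ⟨by omega⟩
  rw [hm0.starCond_iff hn]
  constructor
  · rintro ⟨h0, hstar⟩
    exact ⟨fun s => m0 (gridPoint p n s), fun α hα => hm0.coeff_eq hα, fun s _ => rfl,
      (congrArg m0 (gridPoint_zero n)).trans h0, hstar⟩
  · rintro ⟨b, -, hb, hb0, hstar⟩
    refine ⟨?_, fun l hl => ?_⟩
    · rw [← hb0, hb 0 (pow_pos (NeZero.pos p) n)]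
      exact congrArg m0 (gridPoint_zero n).symm
    calc ∑ i ∈ range p, ‖m0 (gridPoint p n (l + i * p ^ (n - 1)))‖ ^ 2
        = ∑ i ∈ range p, ‖b (l + i * p ^ (n - 1))‖ ^ 2 :=
          sum_congr rfl fun i hi => by
            rw [hb _ (add_mul_pow_pred_lt hn hl (mem_range.1 hi))]
            rfl
      _ ≤ 1 := hstar l hl

end Vilenkin
end
end
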